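/- Let $\pi$ be an invariant probability measure of a Markov chain on state space $\Theta$ with transition kernel $p$, and suppose there is a measurable function $h: \Theta \to \mathbb{R}$ and constants $a, b, c > 0$ such that $\int \mathbb{E}_\theta[u(\theta_1)]\,\pi(d\theta) - \int u(\theta)\,\pi(d\theta) = 0$ and $\mathbb{E}_\theta[u(\theta_1)] - u(\theta) \le -\eta(a\,h(\theta)^2 - b\,h(\theta) - c)$ for all $\theta$, where $\eta > 0$ and $h \ge 0$. Let $r = \frac{b + \sqrt{b^2+4ac}}{2a}$, $\beta > 1$, and $B = \{\theta: h(\theta) \le \beta r\}$. Then $\frac{\pi(B^c)}{\pi(B)} \le \frac{1}{\beta^2 - 1} \cdot \frac{c + b^2/(4a)}{c}$. -/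

import Mathlib

open MeasureTheory ProbabilityTheory

/-!
Write `g = a h² - b h - c`, so the drift condition reads `E_θ u(θ₁) - u(θ) ≤ -η g(θ)`.
Integrating against the invariant measure `π` kills the left-hand side, hence `∫ g dπ ≤ 0`.
The quadratic `g` is bounded below by its minimum `-(c + b²/(4a))` everywhere, and on
`{h > β r}`, since `r` is the positive root of `g`, by `(β² - 1) c`. Splitting `∫ g dπ` along
`B` and `Bᶜ` gives `(β² - 1) c · π(Bᶜ) ≤ (c + b²/(4a)) · π(B)`.
-/

section Quadratic

variable {a b c : ℝ}

lemma neg_le_quadratic (ha : 0 < a) (x : ℝ) :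
    -(c + b ^ 2 / (4 * a)) ≤ a * x ^ 2 - b * x - c := by
  have hsq : a * x ^ 2 - b * x + b ^ 2 / (4 * a) = (2 * a * x - b) ^ 2 / (4 * a) := by
    field_simp
    ring
  have : 0 ≤ (2 * a * x - b) ^ 2 / (4 * a) := by positivity
  linarith

lemma quadratic_eq_zero_and_pos_of_eq_root (ha : 0 < a) (hc : 0 < c) {r : ℝ}
    (hr : r = (b + √(b ^ 2 + 4 * a * c)) / (2 * a)) :
    a * r ^ 2 - b * r - c = 0 ∧ 0 < r := by
  set s := √(b ^ 2 + 4 * a * c)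
  have hsq : s ^ 2 = b ^ 2 + 4 * a * c := Real.sq_sqrt (by positivity)
  have hlt : |b| < s := by
    rw [← Real.sqrt_sq_eq_abs]
    exact Real.sqrt_lt_sqrt (sq_nonneg b) (by nlinarith)
  subst hr
  constructor
  · have hval : a * ((b + s) / (2 * a)) ^ 2 - b * ((b + s) / (2 * a)) - c
        = (s ^ 2 - (b ^ 2 + 4 * a * c)) / (4 * a) := by
      field_simp
      ring
    rw [hval, hsq, sub_self, zero_div]
  · have : 0 < b + s := by linarith [neg_abs_le b]
    positivity

lemma quadratic_ge_of_mul_root_le (ha : 0 < a) (hb : 0 ≤ b) (hc : 0 < c) {r β x : ℝ}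
    (hroot : a * r ^ 2 - b * r - c = 0) (hr : 0 < r) (hβ : 1 ≤ β) (hx : β * r ≤ x) :
    (β ^ 2 - 1) * c ≤ a * x ^ 2 - b * x - c := by
  have hbr : b < a * r := by nlinarith
  have hβr : r ≤ β * r := le_mul_of_one_le_left hr.le hβ
  -- the quadratic increases beyond its vertex `b / (2a) < r`, and at `β r` it equals
  -- `(β² - 1) c + b β r (β - 1)`
  have hmono : 0 ≤ (x - β * r) * (a * (x + β * r) - b) :=
    mul_nonneg (by linarith) (by nlinarith)
  have hβr_nonneg : 0 ≤ b * (β * r) * (β - 1) :=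
    mul_nonneg (mul_nonneg hb (by linarith)) (by linarith)
  linear_combination hmono + hβr_nonneg - β ^ 2 * hroot

end Quadratic

section Drift

variable {S : Type*} [MeasurableSpace S]

lemma ProbabilityTheory.Kernel.integrable_integral_of_abs_le {T : Type*} [MeasurableSpace T]
    (κ : Kernel S T) [IsMarkovKernel κ] (π : Measure S) [IsFiniteMeasure π]
    {u : T → ℝ} (hu : Measurable u) {M : ℝ} (hM : ∀ θ, |u θ| ≤ M) :
    Integrable (fun θ ↦ ∫ θ₁, u θ₁ ∂κ θ) π :=
  .of_bound hu.stronglyMeasurable.integral_kernel.aestronglyMeasurable M <| .of_forall fun θ ↦ by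
    simpa using norm_integral_le_of_norm_le_const (μ := κ θ) (f := u) (.of_forall hM)

variable {κ : Kernel S S} [IsMarkovKernel κ] {π : Measure S} [IsFiniteMeasure π]
  {u g : S → ℝ} {η : ℝ} (hη : 0 < η) (hu : Measurable u) {M : ℝ} (hM : ∀ θ, |u θ| ≤ M)
  (hdrift : ∀ θ, (∫ θ₁, u θ₁ ∂κ θ) - u θ ≤ -η * g θ)
include hη hu hM hdrift

lemma integrable_of_drift (hg : Measurable g) {K : ℝ} (hgK : ∀ θ, -K ≤ g θ) :
    Integrable g π := by
  have hupper : Integrable (fun θ ↦ η⁻¹ * (u θ - ∫ θ₁, u θ₁ ∂κ θ)) π :=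
    ((Integrable.of_bound hu.aestronglyMeasurable M (.of_forall hM)).sub
      (κ.integrable_integral_of_abs_le π hu hM)).const_mul _
  refine integrable_of_le_of_le hg.aestronglyMeasurable (.of_forall hgK)
    (.of_forall fun θ ↦ ?_) (integrable_const _) hupper
  rw [le_inv_mul_iff₀ hη]
  linarith [hdrift θ]

lemma integral_nonpos_of_drift (hg : Integrable g π)
    (hinv : (∫ θ, (∫ θ₁, u θ₁ ∂κ θ) ∂π) - (∫ θ, u θ ∂π) = 0) :
    ∫ θ, g θ ∂π ≤ 0 := by
  have hu_int : Integrable u π := .of_bound hu.aestronglyMeasurable M (.of_forall hM)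
  have hEu_int := κ.integrable_integral_of_abs_le π hu hM
  have hmono : ∫ θ, η * g θ ∂π ≤ ∫ θ, (u θ - ∫ θ₁, u θ₁ ∂κ θ) ∂π :=
    integral_mono (hg.const_mul η) (hu_int.sub hEu_int) fun θ ↦ by linarith [hdrift θ]
  rw [integral_const_mul, integral_sub hu_int hEu_int] at hmono
  exact nonpos_of_mul_nonpos_right (by linarith) hη

end Drift

lemma mul_measureReal_compl_le_of_integral_nonpos {S : Type*} [MeasurableSpace S]
    {π : Measure S} [IsFiniteMeasure π] {g : S → ℝ} (hg : Integrable g π)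
    (hint : ∫ θ, g θ ∂π ≤ 0) {B : Set S} (hB : MeasurableSet B) {K L : ℝ}
    (hK : ∀ θ ∈ B, -K ≤ g θ) (hL : ∀ θ ∈ Bᶜ, L ≤ g θ) :
    L * π.real Bᶜ ≤ K * π.real B := by
  have hBint : -K * π.real B ≤ ∫ θ in B, g θ ∂π := by
    simpa [setIntegral_const, mul_comm] using
      setIntegral_mono_on integrableOn_const hg.integrableOn hB hK
  have hBcint : L * π.real Bᶜ ≤ ∫ θ in Bᶜ, g θ ∂π := by
    simpa [setIntegral_const, mul_comm] using
      setIntegral_mono_on integrableOn_const hg.integrableOn hB.compl hL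
  linarith [integral_add_compl hB hg]

theorem stmt11_general {S : Type*} [MeasurableSpace S]
    (κ : ProbabilityTheory.Kernel S S) [ProbabilityTheory.IsMarkovKernel κ]
    (π : Measure S) [IsProbabilityMeasure π]
    (u : S → ℝ) (humeas : Measurable u) (hubd : ∃ M, ∀ θ, |u θ| ≤ M)
    (h : S → ℝ) (hhmeas : Measurable h)
    (a b c η : ℝ) (ha : 0 < a) (hb : 0 < b) (hc : 0 < c) (hη : 0 < η)
    (hinv : (∫ θ, (∫ θ₁, u θ₁ ∂ κ θ) ∂π) - (∫ θ, u θ ∂π) = 0)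
    (hdrift : ∀ θ, (∫ θ₁, u θ₁ ∂ κ θ) - u θ ≤ -η * (a * h θ ^ 2 - b * h θ - c))
    (r : ℝ) (hr : r = (b + Real.sqrt (b ^ 2 + 4 * a * c)) / (2 * a))
    (β : ℝ) (hβ : 1 < β)
    (B : Set S) (hB : B = {θ | h θ ≤ β * r}) :
    (π Bᶜ).toReal / (π B).toReal ≤ (1 / (β ^ 2 - 1)) * ((c + b ^ 2 / (4 * a)) / c) := by
  obtain ⟨M, hM⟩ := hubd
  obtain ⟨hroot, hr0⟩ := quadratic_eq_zero_and_pos_of_eq_root ha hc hr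
  have hg_meas : Measurable fun θ ↦ a * h θ ^ 2 - b * h θ - c := by fun_prop
  have hg_int := integrable_of_drift (π := π) hη humeas hM hdrift hg_meas
    (fun θ ↦ neg_le_quadratic ha (h θ))
  have hB_meas : MeasurableSet B := hB ▸ measurableSet_le hhmeas measurable_const
  have hmass := mul_measureReal_compl_le_of_integral_nonpos hg_int
    (integral_nonpos_of_drift hη humeas hM hdrift hg_int hinv) hB_meas
    (fun θ _ ↦ neg_le_quadratic ha (h θ))
    (fun θ hθ ↦ quadratic_ge_of_mul_root_le ha hb.le hc hroot hr0 hβ.le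
      (by simpa [hB] using hθ : β * r < h θ).le)
  have hβc : 0 < c * (β ^ 2 - 1) := mul_pos hc (by nlinarith)
  rw [one_div_mul_eq_div, div_div]
  refine div_le_of_le_mul₀ ENNReal.toReal_nonneg (by positivity) ?_
  rw [div_mul_eq_mul_div, le_div_iff₀ hβc]
  simpa only [measureReal_def, mul_comm] using hmass

/-- Concentration of an invariant distribution: under the quadratic drift bound and
stationarity, `π(Bᶜ)/π(B) ≤ (1/(β²-1)) · (c + b²/(4a))/c` where
`B = {θ : h(θ) ≤ β r}` and `r` is the positive root of `a r² - b r - c = 0`. -/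
theorem stmt11 {S : Type*} [MeasurableSpace S]
    (κ : ProbabilityTheory.Kernel S S) [ProbabilityTheory.IsMarkovKernel κ]
    (π : Measure S) [IsProbabilityMeasure π]
    (u : S → ℝ) (humeas : Measurable u) (hubd : ∃ M, ∀ θ, |u θ| ≤ M)
    (h : S → ℝ) (hhmeas : Measurable h) (hh0 : ∀ θ, 0 ≤ h θ)
    (a b c η : ℝ) (ha : 0 < a) (hb : 0 < b) (hc : 0 < c) (hη : 0 < η)
    (hinv : (∫ θ, (∫ θ₁, u θ₁ ∂ κ θ) ∂π) - (∫ θ, u θ ∂π) = 0)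
    (hdrift : ∀ θ, (∫ θ₁, u θ₁ ∂ κ θ) - u θ ≤ -η * (a * h θ ^ 2 - b * h θ - c))
    (r : ℝ) (hr : r = (b + Real.sqrt (b ^ 2 + 4 * a * c)) / (2 * a))
    (β : ℝ) (hβ : 1 < β)
    (B : Set S) (hB : B = {θ | h θ ≤ β * r}) (hπB : 0 < π B) :
    (π Bᶜ).toReal / (π B).toReal ≤ (1 / (β ^ 2 - 1)) * ((c + b ^ 2 / (4 * a)) / c) :=
  stmt11_general κ π u humeas hubd h hhmeas a b c η ha hb hc hη hinv hdrift r hr β hβ B hB
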